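/- Let 0<q<1 and let (α̃_{2k})_{k≥0} be real numbers with α̃_0 ≠ 0. Define p̃_n(z) = Σ_{k=0}^n qbinom(2n+1,2k+1) · q^{k(2k+1)} α̃_{2(n-k)}/[2(n-k)+1]_q · z^{2k+1}. Then p̃_n(0) = 0, p̃_0(z) = α̃_0 z, and D_{q^{-1}}² p̃_n(z) = [2n]_q [2n+1]_q p̃_{n-1}(z) for all n ≥ 1, where D_{q^{-1}} f(z) = (f(z) - f(z/q))/((1 - q^{-1})z). -/

import Mathlib

noncomputable def qNum (q : ℝ) (m : ℕ) : ℝ := (1 - q ^ m) / (1 - q)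

noncomputable def qFact (q : ℝ) (m : ℕ) : ℝ := ∏ j ∈ Finset.range m, qNum q (j + 1)

noncomputable def qBinom (q : ℝ) (n k : ℕ) : ℝ := qFact q n / (qFact q k * qFact q (n - k))

noncomputable def Dq (q : ℝ) (f : ℝ → ℝ) (z : ℝ) : ℝ :=
  if z = 0 then deriv f 0 else (f z - f (q * z)) / ((1 - q) * z)

noncomputable def jacksonIntegral01 (q : ℝ) (f : ℝ → ℝ) : ℝ :=
  (1 - q) * ∑' j : ℕ, q ^ j * f (q ^ j)

lemma qNum_pos' {q : ℝ} (hq0 : 0 < q) (hq1 : q < 1) (m : ℕ) : 0 < qNum q (m + 1) := by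
  have : q ^ (m+1) < 1 := pow_lt_one₀ hq0.le hq1 (Nat.succ_ne_zero m)
  exact div_pos (by linarith) (by linarith)

lemma qFact_pos' {q : ℝ} (hq0 : 0 < q) (hq1 : q < 1) (m : ℕ) : 0 < qFact q m :=
  Finset.prod_pos fun j _ => qNum_pos' hq0 hq1 j

lemma qFact_succ' (q : ℝ) (m : ℕ) : qFact q (m+1) = qFact q m * qNum q (m+1) :=
  Finset.prod_range_succ _ _

lemma qNum_inv_mul' {q : ℝ} (hq : q ≠ 0) (h1q : (1:ℝ) - q ≠ 0) (h1q' : (1:ℝ) - q⁻¹ ≠ 0)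
    (m : ℕ) : qNum q⁻¹ m * q ^ m = q * qNum q m := by
  unfold qNum
  rw [inv_pow, div_mul_eq_mul_div, mul_div_assoc', div_eq_div_iff h1q' h1q]
  have h1 : (q^m:ℝ)⁻¹ * q^m = 1 := inv_mul_cancel₀ (pow_ne_zero _ hq)
  have h2 : q * q⁻¹ = 1 := mul_inv_cancel₀ hq
  linear_combination (q-1) * h1 + (1 - q^m) * h2

lemma Dq_sum' (q' : ℝ) (hq' : q' ≠ 1) (n : ℕ) (c : ℕ → ℝ) (e : ℕ → ℕ) (z : ℝ) :
    Dq q' (fun z => ∑ k ∈ Finset.range n, c k * z ^ (e k)) z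
      = ∑ k ∈ Finset.range n, c k * qNum q' (e k) * z ^ (e k - 1) := by
  have hq'' : (1:ℝ) - q' ≠ 0 := sub_ne_zero.mpr (Ne.symm hq')
  unfold Dq
  split_ifs with hz
  · subst hz
    rw [deriv_fun_sum (fun i _ => ((differentiable_pow (e i)).const_mul (c i)).differentiableAt)]
    refine Finset.sum_congr rfl fun k _ => ?_
    rw [deriv_const_mul _ (differentiable_pow (e k)).differentiableAt, deriv_pow_field]
    match h : e k with
    | 0 => simp [qNum]
    | 1 => simp [qNum, div_self hq'']
    | (m+2) => simp [qNum]
  · rw [← Finset.sum_sub_distrib, Finset.sum_div]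
    refine Finset.sum_congr rfl fun k _ => ?_
    match h : e k with
    | 0 => simp [qNum]
    | (m+1) =>
      rw [mul_pow, qNum]
      field_simp
      rw [Nat.add_sub_cancel]
      ring

lemma key' {q : ℝ} (hq0 : 0 < q) (hq1 : q < 1) (m j : ℕ) :
    qBinom q (2*m+2*j+3) (2*j+3) * q^((j+1)*(2*j+3)) * (qNum q⁻¹ (2*j+3) * qNum q⁻¹ (2*j+2))
    = qNum q (2*m+2*j+2) * qNum q (2*m+2*j+3) *
      (qBinom q (2*m+2*j+1) (2*j+1) * q^(j*(2*j+1))) := by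
  have hq : q ≠ 0 := hq0.ne'
  have h1q : (1:ℝ) - q ≠ 0 := by linarith
  have h1q' : (1:ℝ) - q⁻¹ ≠ 0 := by
    have : 1 < q⁻¹ := (one_lt_inv₀ hq0).mpr hq1
    linarith
  have hpow : q^((j+1)*(2*j+3)) * (q*q) = q^(j*(2*j+1)) * (q^(2*j+3) * q^(2*j+2)) := by
    rw [← pow_add q (2*j+3), ← pow_add]
    rw [show j*(2*j+1) + (2*j+3 + (2*j+2)) = (j+1)*(2*j+3) + 2 by ring, pow_add]
    ring
  have hE3 := qNum_inv_mul' hq h1q h1q' (2*j+3)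
  have hF2 := qNum_inv_mul' hq h1q h1q' (2*j+2)
  have hmid : q^((j+1)*(2*j+3)) * (qNum q⁻¹ (2*j+3) * qNum q⁻¹ (2*j+2))
      = q^(j*(2*j+1)) * (qNum q (2*j+3) * qNum q (2*j+2)) := by
    have hne : q^(2*j+3) * q^(2*j+2) ≠ 0 := by positivity
    apply mul_right_cancel₀ hne
    calc q^((j+1)*(2*j+3)) * (qNum q⁻¹ (2*j+3) * qNum q⁻¹ (2*j+2)) * (q^(2*j+3) * q^(2*j+2))
        = q^((j+1)*(2*j+3)) * ((qNum q⁻¹ (2*j+3) * q^(2*j+3)) * (qNum q⁻¹ (2*j+2) * q^(2*j+2))) := by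
          ring
      _ = q^((j+1)*(2*j+3)) * ((q * qNum q (2*j+3)) * (q * qNum q (2*j+2))) := by rw [hE3, hF2]
      _ = (q^((j+1)*(2*j+3)) * (q*q)) * (qNum q (2*j+3) * qNum q (2*j+2)) := by ring
      _ = (q^(j*(2*j+1)) * (q^(2*j+3) * q^(2*j+2))) * (qNum q (2*j+3) * qNum q (2*j+2)) := by
          rw [hpow]
      _ = q^(j*(2*j+1)) * (qNum q (2*j+3) * qNum q (2*j+2)) * (q^(2*j+3) * q^(2*j+2)) := by ring
  unfold qBinom
  have e1 : 2*m+2*j+3 - (2*j+3) = 2*m := by omega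
  have e2 : 2*m+2*j+1 - (2*j+1) = 2*m := by omega
  rw [e1, e2]
  have f1 : qFact q (2*m+2*j+3) = qFact q (2*m+2*j+1) * qNum q (2*m+2*j+2) * qNum q (2*m+2*j+3) := by
    rw [show 2*m+2*j+3 = (2*m+2*j+1)+1+1 by ring, qFact_succ', qFact_succ']
  have f2 : qFact q (2*j+3) = qFact q (2*j+1) * qNum q (2*j+2) * qNum q (2*j+3) := by
    rw [show 2*j+3 = (2*j+1)+1+1 by ring, qFact_succ', qFact_succ']
  rw [f1, f2, mul_assoc, hmid]
  have hA := (qFact_pos' hq0 hq1 (2*j+1)).ne'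
  have hB := (qFact_pos' hq0 hq1 (2*m)).ne'
  have hD : qNum q (2*j+2) ≠ 0 := (qNum_pos' hq0 hq1 (2*j+1)).ne'
  have hE : qNum q (2*j+3) ≠ 0 := (qNum_pos' hq0 hq1 (2*j+2)).ne'
  field_simp

theorem stmt18 (q : ℝ) (hq0 : 0 < q) (hq1 : q < 1) (α : ℕ → ℝ) (hα : α 0 ≠ 0)
    (p : ℕ → ℝ → ℝ)
    (hp : ∀ n z, p n z = ∑ k ∈ Finset.range (n + 1),
      qBinom q (2 * n + 1) (2 * k + 1) * q ^ (k * (2 * k + 1)) *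
        (α (2 * (n - k)) / qNum q (2 * (n - k) + 1)) * z ^ (2 * k + 1)) :
    (∀ n, p n 0 = 0) ∧
    (∀ z : ℝ, p 0 z = α 0 * z) ∧
    (∀ n, 1 ≤ n → ∀ z : ℝ,
      Dq q⁻¹ (Dq q⁻¹ (p n)) z = qNum q (2 * n) * qNum q (2 * n + 1) * p (n - 1) z) := by
  have h1q : (1:ℝ) - q ≠ 0 := by linarith
  have hq1inv : q⁻¹ ≠ 1 := by
    have : 1 < q⁻¹ := (one_lt_inv₀ hq0).mpr hq1
    linarith
  have hqNum1 : qNum q 1 = 1 := by unfold qNum; rw [pow_one]; exact div_self h1q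
  refine ⟨?_, ?_, ?_⟩
  · intro n
    rw [hp]
    exact Finset.sum_eq_zero fun k _ => by rw [zero_pow (by omega), mul_zero]
  · intro z
    rw [hp]
    have hf1 : qFact q 1 = 1 := by
      rw [show (1:ℕ) = 0 + 1 from rfl, qFact_succ', hqNum1]
      simp [qFact]
    simp [qBinom, hf1, hqNum1, qFact]
  · intro n hn z
    obtain ⟨n', rfl⟩ : ∃ n', n = n' + 1 := ⟨n - 1, by omega⟩
    set c : ℕ → ℝ := fun k => qBinom q (2 * (n'+1) + 1) (2 * k + 1) * q ^ (k * (2 * k + 1)) *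
      (α (2 * (n'+1 - k)) / qNum q (2 * (n'+1 - k) + 1)) with hc
    have hpn : p (n'+1) = fun z => ∑ k ∈ Finset.range (n'+2), c k * z ^ (2*k+1) :=
      funext fun z => hp (n'+1) z
    have step1 : Dq q⁻¹ (p (n'+1))
        = fun z => ∑ k ∈ Finset.range (n'+2), (c k * qNum q⁻¹ (2*k+1)) * z ^ (2*k+1-1) := by
      rw [hpn]; funext w; exact Dq_sum' q⁻¹ hq1inv _ c (fun k => 2*k+1) w
    have step2 : Dq q⁻¹ (Dq q⁻¹ (p (n'+1))) z
        = ∑ k ∈ Finset.range (n'+2),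
            (c k * qNum q⁻¹ (2*k+1)) * qNum q⁻¹ (2*k+1-1) * z ^ (2*k+1-1-1) := by
      rw [step1]; exact Dq_sum' q⁻¹ hq1inv _ _ (fun k => 2*k+1-1) z
    rw [step2, Finset.sum_range_succ']
    have hz0 : qNum q⁻¹ (2*0+1-1) = 0 := by norm_num [qNum]
    rw [hz0]
    rw [show n' + 1 - 1 = n' from rfl, hp n', Finset.mul_sum]
    simp only [mul_zero, zero_mul, add_zero]
    refine Finset.sum_congr rfl fun i hi => ?_
    have hin : i ≤ n' := by
      have := Finset.mem_range.mp hi; omega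
    obtain ⟨m, hm⟩ : ∃ m, n' = i + m := ⟨n' - i, by omega⟩
    simp only [hc]
    rw [hm]
    rw [show 2*(i+1)+1-1-1 = 2*i+1 from by omega,
        show 2*(i+1)+1-1 = 2*i+2 from by omega,
        show 2*(i+1)+1 = 2*i+3 from by omega,
        show 2*(i+m+1)+1 = 2*m+2*i+3 from by omega,
        show i+m+1-(i+1) = m from by omega,
        show 2*(i+m) = 2*m+2*i from by ring,
        show i+m-i = m from by omega,
        show 2*(i+m+1) = 2*m+2*i+2 from by omega]
    have hk := key' hq0 hq1 m i
    linear_combination (α (2*m) / qNum q (2*m+1) * z^(2*i+1)) * hk
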